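/- arXiv:1702.01399 — 2 statements merged into one kernel-verified Lean document; each statement's English description precedes it below -/
import Mathlib

section
/- Let S = diag(0, [[0, ω],[-ω, 0]]) ∈ ℝ^{3×3} with ω ≠ 0, and D = [1, 1, 0] ∈ ℝ^{1×3}. Then the pair (S, D) is observable, i.e., for every λ ∈ ℂ the matrix obtained by stacking S - λI on top of D has rank 3. -/
open Matrix

theorem Matrix.rank_eq_card_of_mulVec_injective {K m n : Type*} [Field K] [Fintype m] [Fintype n]
    {A : Matrix m n K} (hA : Function.Injective A.mulVec) : A.rank = Fintype.card n := by
  rw [← rank_transpose]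
  exact LinearIndependent.rank_matrix (by rwa [row_transpose, ← mulVec_injective_iff])

theorem harmonic_pbh_mulVec_injective {K : Type*} [Field K] {ω : K} (hω : ω ≠ 0) (lam : K) :
    Function.Injective
      (fromRows (!![0, 0, 0; 0, 0, ω; 0, -ω, 0] - lam • (1 : Matrix (Fin 3) (Fin 3) K))
        !![1, 1, 0]).mulVec := by
  rw [← coe_mulVecLin, injective_iff_map_eq_zero]
  intro v hv
  have row (i) := congrFun hv i
  simp only [mulVecLin_apply, mulVec, dotProduct, Fin.sum_univ_three] at row
  have h0 : lam * v 0 = 0 := by simpa using row (.inl 0)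
  have h1 : ω * v 2 - lam * v 1 = 0 := by simpa [sub_eq_add_neg, add_comm] using row (.inl 1)
  have h2 : -(ω * v 1) - lam * v 2 = 0 := by simpa [sub_eq_add_neg] using row (.inl 2)
  have h3 : v 0 + v 1 = 0 := by simpa using row (.inr 0)
  -- `D v = 0` turns `λ v₀ = 0` into `λ v₁ = 0`, after which the rotation block forces `v₂ = v₁ = 0`.
  have hv2 : v 2 = 0 := by
    refine (mul_eq_zero.mp ?_).resolve_left hω
    linear_combination h1 + lam * h3 - h0
  have hv1 : v 1 = 0 := by
    refine (mul_eq_zero.mp ?_).resolve_left hω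
    linear_combination -h2 - lam * hv2
  have hv0 : v 0 = 0 := by linear_combination h3 - hv1
  ext i
  fin_cases i <;> assumption

theorem stmt8 (ω : ℝ) (hω : ω ≠ 0) :
    ∀ lam : ℂ,
      (Matrix.fromRows
        (!![0, 0, 0; 0, 0, (ω : ℂ); 0, -(ω : ℂ), 0] - lam • (1 : Matrix (Fin 3) (Fin 3) ℂ))
        (!![1, 1, 0])).rank = 3 := fun lam =>
  rank_eq_card_of_mulVec_injective (harmonic_pbh_mulVec_injective (by exact_mod_cast hω) lam)
    |>.trans (Fintype.card_fin 3)
end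

section
/- Let S ∈ ℝ^{(2k+1)×(2k+1)} be block diagonal with first block the 1×1 zero matrix and subsequent 2×2 blocks [[0, ω_j],[-ω_j, 0]] for distinct nonzero frequencies ω_1,…,ω_k, and let D = [1, 1, 0, 1, 0, …, 1, 0] ∈ ℝ^{1×(2k+1)}. Then for every λ ∈ ℂ, rank of the matrix [S^T - λI, D^T] (as columns) equals 2k+1; hence (S, D) is observable. -/
/-!
By the Popov–Belevitch–Hautus test the rank is full unless some eigenvector `v` of `S` (for the
eigenvalue `λ`) satisfies `D v = 0`. On the `j`-th rotation block a nonzero component `(x_j, y_j)`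
of `v` forces `λ² + ω_j² = 0`; as the `ω_j` are distinct and positive this happens for at most one
`j`, and then `λ ≠ 0` also kills the first coordinate. So `D v = x₀ + ∑ x_j` reduces to a single
term, which must vanish, and then every block vanishes.
-/

open Matrix Finset

namespace Matrix

variable {K n m : Type*} [Field K] [Fintype n] [DecidableEq n] [Fintype m]

theorem rank_fromCols_transpose_sub_smul_eq_card (A : Matrix n n K) (C : Matrix m n K) (μ : K)
    (h : ∀ v, A *ᵥ v = μ • v → C *ᵥ v = 0 → v = 0) :
    (fromCols (Aᵀ - μ • 1) Cᵀ).rank = Fintype.card n := by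
  have hinj : Function.Injective (fromRows (A - μ • 1) C).mulVecLin := by
    rw [← LinearMap.ker_eq_bot, ker_mulVecLin_eq_bot_iff]
    intro v hv
    rw [fromRows_mulVec, ← Sum.elim_zero_zero, Sum.elim_eq_iff] at hv
    rw [sub_mulVec, smul_mulVec, one_mulVec, sub_eq_zero] at hv
    exact h v hv.1 hv.2
  rw [← rank_transpose, transpose_fromCols, transpose_sub, transpose_transpose, transpose_smul,
    transpose_one, transpose_transpose, rank, LinearMap.finrank_range_of_inj hinj,
    Module.finrank_fintype_fun_eq_card]

end Matrix

theorem sum_range_two_mul {M : Type*} [AddCommMonoid M] (f : ℕ → M) (k : ℕ) :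
    ∑ m ∈ range (2 * k), f m = ∑ j ∈ range k, (f (2 * j) + f (2 * j + 1)) := by
  induction k with
  | zero => simp
  | succ k ih =>
    rw [mul_add, mul_one, sum_range_succ, sum_range_succ, sum_range_succ, ih, add_assoc]

theorem sq_add_sq_eq_zero_of_rotation_eq {K : Type*} [Field K] {ω lam x y : K}
    (hx : ω * y = lam * x) (hy : -ω * x = lam * y) (hx0 : x ≠ 0) : lam ^ 2 + ω ^ 2 = 0 := by
  have : (lam ^ 2 + ω ^ 2) * x = 0 := by linear_combination lam * hx.symm - ω * hy
  exact (mul_eq_zero.mp this).resolve_right hx0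

theorem rotation_blocks_eq_zero {K : Type*} [Field K] {k : ℕ} {ω x y : ℕ → K} {lam x₀ : K}
    (hω : ∀ j < k, ω j ≠ 0) (hsq : ∀ i < k, ∀ j < k, ω i ^ 2 = ω j ^ 2 → i = j)
    (h₀ : lam * x₀ = 0) (hx : ∀ j < k, ω j * y j = lam * x j)
    (hy : ∀ j < k, -ω j * x j = lam * y j) (hsum : x₀ + ∑ j ∈ range k, x j = 0) :
    x₀ = 0 ∧ ∀ j < k, x j = 0 ∧ y j = 0 := by
  have hx_zero : ∀ j < k, x j = 0 := by
    intro j₀ hj₀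
    by_contra hne
    have hq₀ := sq_add_sq_eq_zero_of_rotation_eq (hx j₀ hj₀) (hy j₀ hj₀) hne
    have hlam : lam ≠ 0 := by
      rintro rfl
      exact hω j₀ hj₀ (pow_eq_zero_iff two_ne_zero |>.mp (by simpa using hq₀))
    have hx₀ : x₀ = 0 := (mul_eq_zero.mp h₀).resolve_left hlam
    have hothers : ∀ j ∈ range k, j ≠ j₀ → x j = 0 := fun j hj hj₀' ↦ by
      have hj := mem_range.1 hj
      by_contra hxj
      have hq := sq_add_sq_eq_zero_of_rotation_eq (hx j hj) (hy j hj) hxj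
      exact hj₀' (hsq j hj j₀ hj₀ (by linear_combination hq - hq₀))
    rw [hx₀, zero_add, sum_eq_single_of_mem j₀ (mem_range.2 hj₀) hothers] at hsum
    exact hne hsum
  refine ⟨?_, fun j hj ↦ ⟨hx_zero j hj, ?_⟩⟩
  · simpa [sum_eq_zero fun j hj ↦ hx_zero j (mem_range.1 hj)] using hsum
  · have : ω j * y j = 0 := by rw [hx j hj, hx_zero j hj, mul_zero]
    exact (mul_eq_zero.mp this).resolve_left (hω j hj)

/-- Indices are 0-based: index `0` is the `1 × 1` zero block and indices `2j+1, 2j+2` carry the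
block `[[0, ω j], [-ω j, 0]]`. -/
def blockRotationMatrix (k : ℕ) (ω : ℕ → ℝ) : Matrix (Fin (2 * k + 1)) (Fin (2 * k + 1)) ℝ :=
  Matrix.of fun i j ↦
    if i.val % 2 = 1 ∧ j.val = i.val + 1 then ω ((i.val - 1) / 2)
    else if i.val % 2 = 0 ∧ i.val ≠ 0 ∧ j.val + 1 = i.val then -ω ((j.val - 1) / 2)
    else 0

def blockObservationRow (k : ℕ) : Matrix (Fin 1) (Fin (2 * k + 1)) ℝ :=
  Matrix.of fun _ j ↦ if j.val = 0 ∨ j.val % 2 = 1 then 1 else 0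

section

variable {k : ℕ} {ω : ℕ → ℝ} (v : Fin (2 * k + 1) → ℂ)

theorem blockRotationMatrix_mulVec_zero :
    ((blockRotationMatrix k ω).map Complex.ofReal *ᵥ v) 0 = 0 := by
  have : (blockRotationMatrix k ω).map Complex.ofReal 0 = 0 := by
    ext b
    simp [blockRotationMatrix]
  rw [mulVec, this, zero_dotProduct]

theorem blockRotationMatrix_mulVec_odd {j : ℕ} (hj : j < k) :
    ((blockRotationMatrix k ω).map Complex.ofReal *ᵥ v) ⟨2 * j + 1, by omega⟩ =
      ω j * v ⟨2 * j + 2, by omega⟩ := by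
  have : (blockRotationMatrix k ω).map Complex.ofReal ⟨2 * j + 1, by omega⟩ =
      Pi.single ⟨2 * j + 2, by omega⟩ (ω j : ℂ) := by
    ext b
    simp only [map_apply, blockRotationMatrix, of_apply, Pi.single_apply, Fin.ext_iff]
    rcases eq_or_ne b.val (2 * j + 2) with hb | hb
    · rw [if_pos ⟨by omega, hb⟩, if_pos hb, show (2 * j + 1 - 1) / 2 = j by omega]
    · rw [if_neg (by omega), if_neg (by omega), if_neg hb, Complex.ofReal_zero]
  rw [mulVec, this, single_dotProduct]

theorem blockRotationMatrix_mulVec_even {j : ℕ} (hj : j < k) :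
    ((blockRotationMatrix k ω).map Complex.ofReal *ᵥ v) ⟨2 * j + 2, by omega⟩ =
      -ω j * v ⟨2 * j + 1, by omega⟩ := by
  have : (blockRotationMatrix k ω).map Complex.ofReal ⟨2 * j + 2, by omega⟩ =
      Pi.single ⟨2 * j + 1, by omega⟩ (-ω j : ℂ) := by
    ext b
    simp only [map_apply, blockRotationMatrix, of_apply, Pi.single_apply, Fin.ext_iff]
    rcases eq_or_ne b.val (2 * j + 1) with hb | hb
    · rw [if_neg (by omega), if_pos ⟨by omega, by omega, by omega⟩, if_pos hb,
        show (b.val - 1) / 2 = j by omega, Complex.ofReal_neg]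
    · rw [if_neg (by omega), if_neg (by omega), if_neg hb, Complex.ofReal_zero]
  rw [mulVec, this, single_dotProduct]

theorem blockObservationRow_mulVec :
    ((blockObservationRow k).map Complex.ofReal *ᵥ v) 0 =
      Function.extend Fin.val v 0 0 + ∑ j ∈ range k, Function.extend Fin.val v 0 (2 * j + 1) := by
  set V := Function.extend Fin.val v 0
  have hV : ∀ i : Fin (2 * k + 1), V i = v i := Fin.val_injective.extend_apply v 0
  calc ((blockObservationRow k).map Complex.ofReal *ᵥ v) 0
      = ∑ i : Fin (2 * k + 1), if i.val = 0 ∨ i.val % 2 = 1 then V i else 0 := by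
        simp only [mulVec, dotProduct, map_apply, blockObservationRow, of_apply, hV]
        congr! 1 with i
        split_ifs <;> simp
    _ = _ := by
        rw [Fin.sum_univ_eq_sum_range (fun m ↦ if m = 0 ∨ m % 2 = 1 then V m else 0),
          sum_range_succ', sum_range_two_mul]
        simp [Nat.add_mod, add_comm]

theorem blockRotationMatrix_eigenvector_eq_zero (hpos : ∀ j < k, 0 < ω j)
    (hdist : ∀ i j, i < k → j < k → i ≠ j → ω i ≠ ω j) {lam : ℂ}
    (hv : (blockRotationMatrix k ω).map Complex.ofReal *ᵥ v = lam • v)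
    (hD : (blockObservationRow k).map Complex.ofReal *ᵥ v = 0) : v = 0 := by
  set V := Function.extend Fin.val v 0
  have hV : ∀ i : Fin (2 * k + 1), V i = v i := Fin.val_injective.extend_apply v 0
  have hV' : ∀ m (h : m < 2 * k + 1), v ⟨m, h⟩ = V m := fun m h ↦ (hV ⟨m, h⟩).symm
  have hsq : ∀ i < k, ∀ j < k, (ω i : ℂ) ^ 2 = (ω j : ℂ) ^ 2 → i = j := by
    intro i hi j hj hij
    by_contra hne
    exact hdist i j hi hj hne <|
      (sq_eq_sq₀ (hpos i hi).le (hpos j hj).le).1 (by exact_mod_cast hij)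
  obtain ⟨h₀, hblocks⟩ := rotation_blocks_eq_zero (x := fun j ↦ V (2 * j + 1))
    (y := fun j ↦ V (2 * j + 2)) (fun j hj ↦ by exact_mod_cast (hpos j hj).ne') hsq
    (by simpa [blockRotationMatrix_mulVec_zero, hV'] using (congrFun hv 0).symm)
    (fun j hj ↦ by
      have := congrFun hv ⟨2 * j + 1, by omega⟩
      rwa [blockRotationMatrix_mulVec_odd v hj, Pi.smul_apply, smul_eq_mul, hV', hV'] at this)
    (fun j hj ↦ by
      have := congrFun hv ⟨2 * j + 2, by omega⟩
      rwa [blockRotationMatrix_mulVec_even v hj, Pi.smul_apply, smul_eq_mul, hV', hV'] at this)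
    (by rw [← blockObservationRow_mulVec, hD]; rfl)
  ext i
  rw [← hV]
  by_cases hi : i.val = 0
  · rw [hi, h₀]; rfl
  · have hj : (i.val - 1) / 2 < k := by omega
    obtain h | h : i.val = 2 * ((i.val - 1) / 2) + 1 ∨ i.val = 2 * ((i.val - 1) / 2) + 2 := by
      omega
    · rw [h]; exact (hblocks _ hj).1
    · rw [h]; exact (hblocks _ hj).2

end

theorem stmt9 (k : ℕ) (ω : ℕ → ℝ) (hpos : ∀ j < k, 0 < ω j)
    (hdist : ∀ i j, i < k → j < k → i ≠ j → ω i ≠ ω j)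
    (S : Matrix (Fin (2*k+1)) (Fin (2*k+1)) ℝ)
    (hS : ∀ i j : Fin (2*k+1), S i j =
      if i.val % 2 = 1 ∧ j.val = i.val + 1 then ω ((i.val - 1) / 2)
      else if i.val % 2 = 0 ∧ i.val ≠ 0 ∧ j.val + 1 = i.val then -ω ((j.val - 1) / 2)
      else 0)
    (D : Matrix (Fin 1) (Fin (2*k+1)) ℝ)
    (hD : ∀ (a : Fin 1) (j : Fin (2*k+1)), D a j =
      if j.val = 0 ∨ j.val % 2 = 1 then 1 else 0) :
    ∀ lam : ℂ,
      (Matrix.fromCols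
        ((S.transpose.map (fun x => (x : ℂ))) - lam • 1)
        (D.transpose.map (fun x => (x : ℂ)))).rank = 2*k+1 := by
  intro lam
  obtain rfl : S = blockRotationMatrix k ω := Matrix.ext hS
  obtain rfl : D = blockObservationRow k := Matrix.ext hD
  rw [transpose_map, transpose_map]
  exact (rank_fromCols_transpose_sub_smul_eq_card _ _ lam fun v hv hDv ↦
    blockRotationMatrix_eigenvector_eq_zero v hpos hdist hv hDv).trans (Fintype.card_fin _)
end
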